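/- arXiv:2201.05744 — 5 statements merged into one kernel-verified Lean document; each statement's English description precedes it below -/
import Mathlib

section
/- Given a finite directed graph on vertex set {s} ∪ N and a vertex j reachable from s, define the critical agents of j as those vertices k (other than s) that lie on every simple path from s to j. Then the set of critical agents of j, ordered by the relation 'k is critical for k''', forms a linear (total) order: for any two distinct critical agents k and k' of j, either k is a critical agent of k' or k' is a critical agent of k. -/
open SimpleGraph Walk

/-- `k` lies on every simple path from `s` to `j` in `G`. -/
def onAllPaths {V : Type*} (G : SimpleGraph V) (s k j : V) : Prop :=
  ∀ p : G.Path s j, k ∈ p.1.support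

/-- `k` is a critical agent of `j` (w.r.t. the requester `s`): `k ≠ s`, `j` is
reachable from `s`, and `k` lies on every simple path from `s` to `j`. -/
def criticalAgent {V : Type*} (G : SimpleGraph V) (s k j : V) : Prop :=
  k ≠ s ∧ G.Reachable s j ∧ onAllPaths G s k j

/-- Totality: for any walk and two vertices on it, one appears in the prefix up to the other. -/
lemma takeUntil_total {V : Type*} [DecidableEq V] {G : SimpleGraph V} {a b : V}
    (p : G.Walk a b) (u v : V) (hu : u ∈ p.support) (hv : v ∈ p.support) :
    u ∈ (p.takeUntil v hv).support ∨ v ∈ (p.takeUntil u hu).support := by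
  induction p with
  | nil =>
    left
    rw [mem_support_nil_iff] at hu
    subst hu
    exact start_mem_support _
  | @cons a c b r q ih =>
    by_cases hau : a = u
    · subst hau
      exact Or.inl (start_mem_support _)
    by_cases hav : a = v
    · subst hav
      exact Or.inr (start_mem_support _)
    have hu' : u ∈ q.support := by
      rcases List.mem_cons.mp (by simpa using hu) with h | h
      · exact absurd h.symm hau
      · exact h
    have hv' : v ∈ q.support := by
      rcases List.mem_cons.mp (by simpa using hv) with h | h
      · exact absurd h.symm hav
      · exact h
    have e1 : (Walk.cons r q).takeUntil v hv = Walk.cons r (q.takeUntil v hv') := by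
      simp [Walk.takeUntil, hav]
    have e2 : (Walk.cons r q).takeUntil u hu = Walk.cons r (q.takeUntil u hu') := by
      simp [Walk.takeUntil, hau]
    rw [e1, e2, support_cons, support_cons]
    rcases ih hu' hv' with h | h
    · exact Or.inl (List.mem_cons_of_mem _ h)
    · exact Or.inr (List.mem_cons_of_mem _ h)

/-- If `u` appears in the prefix of a simple path `p : s → j` up to `v`, and `u` is on
every simple path from `s` to `j`, then `u` is on every simple path from `s` to `v`. -/
lemma crit_of_before {V : Type*} [DecidableEq V] {G : SimpleGraph V} {s j u v : V}
    (p : G.Walk s j) (hp : p.IsPath) (hv : v ∈ p.support)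
    (hu : u ∈ (p.takeUntil v hv).support)
    (hall : onAllPaths G s u j) (hus : u ≠ s) : criticalAgent G s u v := by
  refine ⟨hus, ⟨p.takeUntil v hv⟩, ?_⟩
  intro q
  by_contra hq
  -- build a walk from s to j avoiding u
  set w : G.Walk s j := q.1.append (p.dropUntil v hv) with hw
  have hmem : u ∈ w.toPath.1.support := hall w.toPath
  have hsub := w.support_toPath_subset hmem
  rw [hw, support_append] at hsub
  rcases List.mem_append.mp hsub with h | h
  · exact hq h
  · -- u is in the tail of the dropUntil part, but also in takeUntil: contradicts nodup
    have hspec := p.take_spec hv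
    have hnodup : p.support.Nodup := hp.support_nodup
    rw [← hspec, support_append] at hnodup
    have := (List.disjoint_of_nodup_append hnodup) hu h
    exact this

/-- The critical agents of a vertex `j` reachable from `s` are totally ordered by
the criticality relation: for distinct critical agents `k, k'` of `j`, either `k`
is a critical agent of `k'` or `k'` is a critical agent of `k`. -/
theorem stmt_0 {V : Type*} [Fintype V] (G : SimpleGraph V) (s j : V)
    (hreach : G.Reachable s j) (k k' : V)
    (hk : criticalAgent G s k j) (hk' : criticalAgent G s k' j) (hne : k ≠ k') :
    criticalAgent G s k k' ∨ criticalAgent G s k' k := by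
  classical
  obtain ⟨w⟩ := hreach
  set P : G.Path s j := w.toPath with hP
  have hkP : k ∈ P.1.support := hk.2.2 P
  have hk'P : k' ∈ P.1.support := hk'.2.2 P
  have hpath : P.1.IsPath := P.2
  rcases takeUntil_total P.1 k k' hkP hk'P with h | h
  · exact Or.inl (crit_of_before P.1 hpath hk'P h hk.2.2 hk.1)
  · exact Or.inr (crit_of_before P.1 hpath hkP h hk'.2.2 hk'.1)
end

section
/- Let j be reachable from s in graph G, with critical-agent sequence (s, i_1, …, i_m) where i_m = j and i_k precedes i_{k'} iff i_k is a critical agent of i_{k'}. For each critical agent i of j, removing i from the graph disconnects from s every vertex whose every simple path from s passes through i; in particular, for k < k', every vertex reachable from s after removing i_k is also reachable from s after removing i_{k'}. That is, the reachable sets satisfy I(G − i_k) ⊆ I(G − i_{k'}). -/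
/-- The graph `G` with the vertex `a` deleted (all edges at `a` removed). -/
def deleteVert {V : Type*} [DecidableEq V] (G : SimpleGraph V) (a : V) : SimpleGraph V where
  Adj u v := G.Adj u v ∧ u ≠ a ∧ v ≠ a
  symm := by constructor; intro u v h; exact ⟨h.1.symm, h.2.2, h.2.1⟩
  loopless := by constructor; intro u h; exact G.irrefl h.1

lemma deleteVert_le {V : Type*} [DecidableEq V] (G : SimpleGraph V) (a : V) :
    deleteVert G a ≤ G := fun _ _ h => h.1

lemma aux1 {V : Type*} [DecidableEq V] {G : SimpleGraph V} {a : V} :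
    ∀ {s x : V} (p : (deleteVert G a).Walk s x), s ≠ a → a ∉ p.support
  | s, _, SimpleGraph.Walk.nil, hs => by simp [Ne.symm hs]
  | s, x, SimpleGraph.Walk.cons h q, hs => by
      simp only [SimpleGraph.Walk.support_cons, List.mem_cons]
      rintro (rfl | hmem)
      · exact hs rfl
      · exact aux1 q h.2.2 hmem

lemma aux2 {V : Type*} [DecidableEq V] {G : SimpleGraph V} {b : V} :
    ∀ {s x : V} (p : G.Walk s x), b ∉ p.support →
      ∀ e ∈ p.edges, e ∈ (deleteVert G b).edgeSet
  | _, _, SimpleGraph.Walk.nil, _ => by simp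
  | s, x, SimpleGraph.Walk.cons h q, hb => by
      simp only [SimpleGraph.Walk.support_cons, List.mem_cons, not_or] at hb
      intro e he
      simp only [SimpleGraph.Walk.edges_cons, List.mem_cons] at he
      rcases he with rfl | he
      · exact (SimpleGraph.mem_edgeSet _).mpr
          ⟨h, fun hsb => hb.1 hsb.symm,
            fun hvb => hb.2 (hvb ▸ SimpleGraph.Walk.start_mem_support q)⟩
      · exact aux2 q hb.2 e he

/-- Transfer a walk in `deleteVert G a` to `G`. -/
lemma edges_in_G {V : Type*} [DecidableEq V] {G : SimpleGraph V} {a s x : V}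
    (p : (deleteVert G a).Walk s x) : ∀ e ∈ p.edges, e ∈ G.edgeSet :=
  fun e he => SimpleGraph.edgeSet_mono (deleteVert_le G a)
    (SimpleGraph.Walk.edges_subset_edgeSet p he)

/-- Removing a critical agent `a` disconnects from `s` every vertex all of whose
simple paths from `s` pass through `a`; and if `a` precedes `b` in the critical-agent
sequence of `j` (i.e. `a` is a critical agent of `b`), then the set of vertices
reachable from `s` after deleting `a` is contained in that after deleting `b`. -/
theorem stmt_1 {V : Type*} [Fintype V] [DecidableEq V] (G : SimpleGraph V) (s j : V)
    (hreach : G.Reachable s j) (a b : V)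
    (ha : criticalAgent G s a j) (hb : criticalAgent G s b j)
    (hab : criticalAgent G s a b) :
    (∀ x, onAllPaths G s a x → ¬ (deleteVert G a).Reachable s x) ∧
    (∀ x, (deleteVert G a).Reachable s x → (deleteVert G b).Reachable s x) := by
  constructor
  · intro x hx hre
    obtain ⟨p⟩ := hre
    have hna : a ∉ p.support := aux1 p (Ne.symm ha.1)
    set q := p.transfer G (edges_in_G p) with hq
    have hmem := hx ⟨q.bypass, q.bypass_isPath⟩
    have : a ∈ q.support := SimpleGraph.Walk.support_bypass_subset q hmem
    rw [SimpleGraph.Walk.support_transfer] at this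
    exact hna this
  · intro x hre
    obtain ⟨p⟩ := hre
    have hna : a ∉ p.support := aux1 p (Ne.symm ha.1)
    have hnb : b ∉ p.support := by
      intro hbmem
      set q := (p.takeUntil b hbmem).transfer G (edges_in_G _) with hq
      have hmem := hab.2.2 ⟨q.bypass, q.bypass_isPath⟩
      have : a ∈ q.support := SimpleGraph.Walk.support_bypass_subset q hmem
      rw [SimpleGraph.Walk.support_transfer] at this
      exact hna (SimpleGraph.Walk.support_takeUntil_subset p hbmem this)
    set pG := p.transfer G (edges_in_G p) with hpG
    have hpb : b ∉ pG.support := by rwa [SimpleGraph.Walk.support_transfer]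
    exact ⟨pG.transfer (deleteVert G b) (aux2 pG hpb)⟩
end

section
/- In the PEV-based Diffusion Mechanism, for every agent i and every report profile θ', agent i's payoff p_i(θ', q_π) does not depend on agent i's own reported distribution f'_i or reported cost c'_i (holding fixed i's reported neighbor set, all other agents' reports, and—if i is selected—i's realized quality q_π). Formally: if two report profiles differ only in agent i's reported f'_i and c'_i, and agent i is selected in both or unselected in both with the same realized quality, then i's payoff is the same under both profiles. -/
open Finset

/-- An agent's report: a distribution over qualities, a cost, and a set of invited neighbours. -/
structure Report (A : Type*) where
  f : ℝ → ℝ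
  c : ℝ
  nbrs : Finset A

/-- Reported expected welfare  E_{f}[Q] - c. -/
def welfare {A : Type*} (Q : Finset ℝ) (r : Report A) : ℝ :=
  (∑ q ∈ Q, q * r.f q) - r.c

/-- `f` is a probability mass function on the finite quality set `Q`. -/
def IsPMF (Q : Finset ℝ) (f : ℝ → ℝ) : Prop :=
  (∀ q ∈ Q, 0 ≤ f q) ∧ (∑ q ∈ Q, f q) = 1

/-- Edge of the reported (diffusion) graph, avoiding a removed set `R` of agents. -/
def edge {A : Type*} (θ : A → Report A) (R : Set A) (a b : A) : Prop :=
  a ∉ R ∧ b ∉ R ∧ b ∈ (θ a).nbrs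

/-- `i` participates: it is reachable from the requester (whose neighbours are `rs`)
avoiding the removed agents `R`.  `participates rs θ {i} k` is membership in I((nil, θ_{-i})). -/
def participates {A : Type*} (rs : Finset A) (θ : A → Report A) (R : Set A) (i : A) : Prop :=
  i ∉ R ∧ ∃ j ∈ rs, j ∉ R ∧ Relation.ReflTransGen (edge θ R) j i

/-- `l` is a simple path from (a neighbour of) the requester to `i` in the reported graph. -/
def pathTo {A : Type*} (rs : Finset A) (θ : A → Report A) (i : A) (l : List A) : Prop :=
  l.Nodup ∧ l.Chain' (edge θ ∅) ∧ (∃ a, l.head? = some a ∧ a ∈ rs) ∧ l.getLast? = some i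

/-- `i` is a critical agent of `j`: `i` lies on every simple path from the requester to `j`. -/
def critical {A : Type*} (rs : Finset A) (θ : A → Report A) (i j : A) : Prop :=
  ∀ l, pathTo rs θ j l → i ∈ l

/-- `v` is the maximum reported welfare among participants when `i` does not
participate (`0` if there are none). -/
def cmax {A : Type*} (Q : Finset ℝ) (rs : Finset A) (θ : A → Report A) (i : A) (v : ℝ) : Prop :=
  0 ≤ v ∧ (∀ k, participates rs θ {i} k → welfare Q (θ k) ≤ v) ∧
    (v = 0 ∨ ∃ k, participates rs θ {i} k ∧ v = welfare Q (θ k))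

/-- An execution of the PEV-based Diffusion Mechanism on report profile `θ`:
`seq 0, …, seq (m-1)` is the critical-agent sequence (i_1, …, i_m) of the
reported-welfare-maximizing agent `j = seq (m-1)`, `w k` the counterfactual maxima,
`t` the index of the selected agent, and `p q i` agent `i`'s payoff when the realized
quality is `q`. -/
structure PEVRun {A : Type*} (Q : Finset ℝ) (rs : Finset A) (θ : A → Report A) where
  m : ℕ
  hm : 0 < m
  seq : ℕ → A
  w : ℕ → ℝ
  t : ℕ
  ht : t < m
  p : ℝ → A → ℝ
  /-- `j = seq (m-1)` maximizes reported expected welfare among participants -/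
  hj : participates rs θ ∅ (seq (m-1)) ∧
    ∀ k, participates rs θ ∅ k → welfare Q (θ k) ≤ welfare Q (θ (seq (m-1)))
  hinj : ∀ k < m, ∀ k' < m, seq k = seq k' → k = k'
  /-- the sequence enumerates exactly the (participating) critical agents of `j` -/
  hcrit : ∀ i, (∃ k < m, seq k = i) ↔
    (critical rs θ i (seq (m-1)) ∧ participates rs θ ∅ i)
  /-- it is ordered by the criticality relation -/
  hord : ∀ k k', k < k' → k' < m → critical rs θ (seq k) (seq k')
  /-- `w k` is the maximum reported welfare among I((nil, θ_{-seq k})) -/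
  hw : ∀ k < m, cmax Q rs θ (seq k) (w k)
  /-- the selected agent is the first in the sequence whose reported welfare equals
  the next counterfactual maximum (and `j` if there is none) -/
  hsel : (t + 1 < m → welfare Q (θ (seq t)) = w (t + 1)) ∧
    ∀ k < t, welfare Q (θ (seq k)) ≠ w (k + 1)
  hpay1 : ∀ q, ∀ k < t, p q (seq k) = w (k + 1) - w k
  hpay2 : ∀ q, p q (seq t) = q - w t
  hpay3 : ∀ q, ∀ k, t < k → k < m → p q (seq k) = 0
  hpay4 : ∀ q i, (∀ k < m, seq k ≠ i) → p q i = 0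


/-! Agent `i`'s own `f` and `c` do not change the reported graph, so the participation sets,
the criticality relation and (since criticality is a partial order on participants) the
critical sequences of both runs up to `i` are the same; only `i`'s reported welfare moves.
The payoff of `i` is built from counterfactual maxima `w` over sets that either exclude `i`,
or, by the selection rule, are not attained at `i`. The one delicate case is when the critical
agents following `i` differ in the two runs: then each run's welfare maximizer avoids the other
run's next critical agent, and both maxima equal the global maximum of reported welfare, which
is attained away from `i` and hence is the same in both runs. -/

section Graph

variable {A : Type*} {rs : Finset A} {θ : A → Report A}

lemma pathTo.exists_prefix {x a : A} {l : List A} (hl : pathTo rs θ x l) (ha : a ∈ l) :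
    ∃ s t, l = s ++ a :: t ∧ pathTo rs θ a (s ++ [a]) ∧ x ∉ s := by
  obtain ⟨s, t, rfl⟩ := List.append_of_mem ha
  obtain ⟨hnd, hc, ⟨b, hb, hbrs⟩, hx⟩ := hl
  have hpre : s ++ [a] <+: s ++ a :: t := ⟨t, by simp⟩
  refine ⟨s, t, rfl, ⟨hnd.sublist hpre.sublist, List.IsChain.prefix hc hpre, ⟨b, ?_, hbrs⟩,
    List.getLast?_concat⟩, fun hxs => ?_⟩
  · cases s <;> simp_all
  · have : x ∈ a :: t := List.mem_of_mem_getLast? (by simpa [List.getLast?_append] using hx)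
    exact List.disjoint_of_nodup_append hnd hxs this

lemma participates_of_pathTo {R : Set A} {x : A} {l : List A} (hl : pathTo rs θ x l)
    (hR : ∀ a ∈ l, a ∉ R) : participates rs θ R x := by
  obtain ⟨-, hc, ⟨j, hj, hjrs⟩, hx⟩ := hl
  have hne : l ≠ [] := by rintro rfl; simp at hj
  have hcR : l.IsChain (edge θ R) :=
    List.IsChain.imp_of_mem_imp (fun a b ha hb hab => ⟨hR a ha, hR b hb, hab.2.2⟩) hc
  have hreach := List.relationReflTransGen_of_exists_isChain l hcR hne
  rw [(List.head_eq_iff_head?_eq_some hne).2 hj,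
    (List.getLast_eq_iff_getLast?_eq_some hne).2 hx] at hreach
  exact ⟨hR x (List.mem_of_mem_getLast? hx), j, hjrs, hR j (List.mem_of_mem_head? hj), hreach⟩

lemma exists_pathTo_of_participates {R : Set A} {x : A} (h : participates rs θ R x) :
    ∃ l, pathTo rs θ x l ∧ ∀ a ∈ l, a ∉ R := by
  obtain ⟨-, j, hjrs, hjR, hreach⟩ := h
  induction hreach with
  | refl => exact ⟨[j], ⟨by simp, .singleton j, ⟨j, rfl, hjrs⟩, rfl⟩, by simpa⟩
  | @tail b c _ hbc ih =>
    obtain ⟨l, hl, hlR⟩ := ih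
    by_cases hc : c ∈ l
    · obtain ⟨s, t, rfl, hp, -⟩ := hl.exists_prefix hc
      exact ⟨s ++ [c], hp, fun a ha => hlR a (by grind)⟩
    · obtain ⟨hnd, hch, ⟨a, ha, hars⟩, hb⟩ := hl
      have hne : l ≠ [] := by rintro rfl; simp at ha
      refine ⟨l ++ [c], ⟨?_, ?_, ⟨a, ?_, hars⟩, by simp⟩, ?_⟩
      · exact hnd.append (List.nodup_singleton c) (by simpa using hc)
      · exact List.isChain_append.2 ⟨hch, .singleton c, by simp [hb, edge, hbc.2.2]⟩
      · rwa [List.head?_append_of_ne_nil _ hne]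
      · intro d hd
        rcases List.mem_append.1 hd with hd | hd
        · exact hlR d hd
        · rw [List.mem_singleton.1 hd]; exact hbc.2.1

lemma participates_empty_of_participates {R : Set A} {x : A} (h : participates rs θ R x) :
    participates rs θ ∅ x :=
  let ⟨_, hl, _⟩ := exists_pathTo_of_participates h
  participates_of_pathTo hl fun _ _ => id

lemma critical_refl (a : A) : critical rs θ a a := fun _ hl =>
  List.mem_of_mem_getLast? hl.2.2.2

lemma critical.trans {a b c : A} (hab : critical rs θ a b) (hbc : critical rs θ b c) :
    critical rs θ a c := fun l hl => by
  obtain ⟨s, t, rfl, hp, -⟩ := hl.exists_prefix (hbc l hl)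
  grind [hab _ hp]

lemma critical.antisymm {a b : A} (hab : critical rs θ a b) (hba : critical rs θ b a)
    (hb : participates rs θ ∅ b) : a = b := by
  obtain ⟨l, hl, -⟩ := exists_pathTo_of_participates hb
  obtain ⟨s, t, rfl, hp, hbs⟩ := hl.exists_prefix (hab l hl)
  grind [hba _ hp]

lemma not_participates_of_critical {a b : A} (h : critical rs θ a b) :
    ¬ participates rs θ {a} b := fun hb =>
  let ⟨l, hl, hR⟩ := exists_pathTo_of_participates hb
  hR a (h l hl) rfl

lemma participates_of_not_critical {a b : A} (h : ¬ critical rs θ a b) :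
    participates rs θ {a} b := by
  obtain ⟨l, hl, hal⟩ := not_forall₂.1 h
  exact participates_of_pathTo hl fun c hc hca => hal (hca ▸ hc)

end Graph

section SameGraph

variable {A : Type*} {rs : Finset A} {θ θ' : A → Report A}

lemma edge_eq_of_nbrs_eq (h : ∀ a, (θ a).nbrs = (θ' a).nbrs) : edge θ = edge θ' := by
  funext R a b
  simp only [edge, h]

lemma participates_iff_of_edge_eq (h : edge θ = edge θ') {R : Set A} {x : A} :
    participates rs θ R x ↔ participates rs θ' R x := by
  simp only [participates, h]

lemma critical_iff_of_edge_eq (h : edge θ = edge θ') {a b : A} :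
    critical rs θ a b ↔ critical rs θ' a b := by
  simp only [critical, pathTo, h]

end SameGraph

section Cmax

variable {A : Type*} {Q : Finset ℝ} {rs : Finset A} {θ θ' : A → Report A} {x : A} {v v' : ℝ}

lemma cmax.le_max (h : cmax Q rs θ x v) {M : ℝ}
    (hM : ∀ k, participates rs θ ∅ k → welfare Q (θ k) ≤ M) : v ≤ max 0 M := by
  rcases h.2.2 with rfl | ⟨k, hk, rfl⟩
  · exact le_max_left _ _
  · exact (hM k (participates_empty_of_participates hk)).trans (le_max_right _ _)

lemma cmax.eq_max (h : cmax Q rs θ x v) {M : ℝ}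
    (hM : ∀ k, participates rs θ ∅ k → welfare Q (θ k) ≤ M) {y : A}
    (hy : participates rs θ {x} y) (hyM : M ≤ welfare Q (θ y)) : v = max 0 M :=
  (h.le_max hM).antisymm (max_le h.1 (hyM.trans (h.2.1 y hy)))

variable {i : A} (hG : edge θ = edge θ')
  (hwel : ∀ a, a ≠ i → welfare Q (θ a) = welfare Q (θ' a))
include hG hwel

lemma cmax.le_of_edge_eq (h : cmax Q rs θ x v) (h' : cmax Q rs θ' x v')
    (hi : ¬ participates rs θ {x} i ∨ welfare Q (θ i) ≠ v) : v ≤ v' := by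
  rcases h.2.2 with rfl | ⟨k, hk, rfl⟩
  · exact h'.1
  · have hki : k ≠ i := by rintro rfl; tauto
    rw [hwel k hki]
    exact h'.2.1 k ((participates_iff_of_edge_eq hG).1 hk)

lemma cmax.eq_of_not_participates (h : cmax Q rs θ x v) (h' : cmax Q rs θ' x v')
    (hi : ¬ participates rs θ {x} i) : v = v' :=
  (h.le_of_edge_eq hG hwel h' (.inl hi)).antisymm <|
    h'.le_of_edge_eq hG.symm (fun a ha => (hwel a ha).symm) h
      (.inl fun hp => hi ((participates_iff_of_edge_eq hG).2 hp))

lemma cmax.eq_of_welfare_ne (h : cmax Q rs θ x v) (h' : cmax Q rs θ' x v')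
    (hi : welfare Q (θ i) ≠ v) (hi' : welfare Q (θ' i) ≠ v') : v = v' :=
  (h.le_of_edge_eq hG hwel h' (.inr hi)).antisymm <|
    h'.le_of_edge_eq hG.symm (fun a ha => (hwel a ha).symm) h (.inr hi')

end Cmax

namespace PEVRun

variable {A : Type*} {Q : Finset ℝ} {rs : Finset A} {θ : A → Report A} (E : PEVRun Q rs θ)

lemma participates_seq {k : ℕ} (hk : k < E.m) : participates rs θ ∅ (E.seq k) :=
  ((E.hcrit _).1 ⟨k, hk, rfl⟩).2

lemma critical_seq {k l : ℕ} (hkl : k ≤ l) (hl : l < E.m) :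
    critical rs θ (E.seq k) (E.seq l) := by
  rcases hkl.lt_or_eq with hkl | rfl
  · exact E.hord k l hkl hl
  · exact critical_refl _

lemma exists_seq_eq {a : A} (ha : critical rs θ a (E.seq (E.m - 1)))
    (hpa : participates rs θ ∅ a) : ∃ k < E.m, E.seq k = a :=
  (E.hcrit a).2 ⟨ha, hpa⟩

lemma seq_last_ne {k : ℕ} (hk : k < E.t) : E.seq (E.m - 1) ≠ E.seq k := fun h => by
  have := E.ht
  have := E.hinj _ (by omega) k (by omega) h
  omega

lemma payoff_eq_zero {a : A} (hprefix : ∀ k < E.t, E.seq k ≠ a) (hsel : E.seq E.t ≠ a)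
    (q : ℝ) :
    E.p q a = 0 := by
  by_cases ha : ∃ k < E.m, E.seq k = a
  · obtain ⟨k, hk, rfl⟩ := ha
    rcases lt_trichotomy k E.t with hkt | rfl | hkt
    · exact absurd rfl (hprefix k hkt)
    · exact absurd rfl hsel
    · exact E.hpay3 q k hkt hk
  · exact E.hpay4 q a fun k hk h => ha ⟨k, hk, h⟩

end PEVRun

section TwoRuns

variable {A : Type*} {Q : Finset ℝ} {rs : Finset A} {θ θ' : A → Report A}
  (hG : edge θ = edge θ') (E : PEVRun Q rs θ) (E' : PEVRun Q rs θ')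
include hG

lemma critical_seq_of_agree {k k' l : ℕ} (hk : k < E.m) (hk' : k' < E'.m)
    (hkk : E.seq k = E'.seq k') (hl' : l ≤ k')
    (hagree : ∀ p < l, E.seq p = E'.seq p) : critical rs θ (E.seq l) (E'.seq l) := by
  have hcrit : critical rs θ (E'.seq l) (E.seq (E.m - 1)) :=
    ((critical_iff_of_edge_eq hG).2 (E'.critical_seq hl' hk')).trans
      (hkk ▸ E.critical_seq (by omega) (by omega))
  obtain ⟨p, hp, hpl⟩ :=
    E.exists_seq_eq hcrit ((participates_iff_of_edge_eq hG).2 (E'.participates_seq (by omega)))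
  have hlp : l ≤ p := by
    by_contra! hpl'
    have := E'.hinj p (by omega) l (by omega) (by rw [← hagree p hpl', hpl])
    omega
  exact hpl ▸ E.critical_seq hlp hp

lemma seq_eq_of_seq_eq {k k' : ℕ} (hk : k < E.m) (hk' : k' < E'.m)
    (hkk : E.seq k = E'.seq k') : ∀ l ≤ k, l ≤ k' → E.seq l = E'.seq l := by
  intro l
  induction l using Nat.strong_induction_on with
  | _ l ih =>
    intro hl hl'
    refine critical.antisymm (critical_seq_of_agree hG E E' hk hk' hkk hl' ?_)
      ((critical_iff_of_edge_eq hG).2 <| critical_seq_of_agree hG.symm E' E hk' hk hkk.symm hl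
        fun p hp => (ih p hp (by omega) (by omega)).symm)
      ((participates_iff_of_edge_eq hG).2 (E'.participates_seq (by omega)))
    exact fun p hp => ih p hp (by omega) (by omega)

lemma index_eq_of_seq_eq {k k' : ℕ} (hk : k < E.m) (hk' : k' < E'.m)
    (hkk : E.seq k = E'.seq k') : k = k' := by
  have hagree := seq_eq_of_seq_eq hG E E' hk hk' hkk
  rcases le_total k k' with h | h
  · exact E'.hinj k (by omega) k' hk' (by rw [← hagree k le_rfl h, hkk])
  · exact E.hinj k hk k' (by omega) (by rw [hagree k' h le_rfl, hkk])

lemma critical_seq_succ_of_critical_last {k : ℕ} (hagree : ∀ l ≤ k, E.seq l = E'.seq l)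
    (hk : k + 1 < E.m) (hne : E.seq (k + 1) ≠ E'.seq (k + 1))
    (hc : critical rs θ (E.seq (k + 1)) (E'.seq (E'.m - 1))) :
    critical rs θ (E'.seq (k + 1)) (E.seq (k + 1)) := by
  obtain ⟨p, hp, hpx⟩ := E'.exists_seq_eq ((critical_iff_of_edge_eq hG).1 hc)
    ((participates_iff_of_edge_eq hG).1 (E.participates_seq hk))
  have hkp : k + 1 < p := by
    by_contra! hpk
    rcases hpk.lt_or_eq with hpk | rfl
    · have := E.hinj p (by omega) (k + 1) hk (by rw [hagree p (by omega), hpx])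
      omega
    · exact hne hpx.symm
  exact (critical_iff_of_edge_eq hG).2 (hpx ▸ E'.critical_seq hkp.le hp)

lemma not_critical_seq_succ_last {k : ℕ} (hagree : ∀ l ≤ k, E.seq l = E'.seq l)
    (hk : k + 1 < E.m) (hk' : k + 1 < E'.m) (hne : E.seq (k + 1) ≠ E'.seq (k + 1)) :
    ¬ critical rs θ (E.seq (k + 1)) (E'.seq (E'.m - 1)) := fun hc => by
  have hx'x := critical_seq_succ_of_critical_last hG E E' hagree hk hne hc
  have hx'j : critical rs θ (E'.seq (k + 1)) (E.seq (E.m - 1)) :=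
    hx'x.trans (E.critical_seq (by omega) (by omega))
  have hxx' := critical_seq_succ_of_critical_last hG.symm E' E (fun l hl => (hagree l hl).symm)
    hk' hne.symm ((critical_iff_of_edge_eq hG).1 hx'j)
  exact hne (critical.antisymm ((critical_iff_of_edge_eq hG).2 hxx') hx'x
    ((participates_iff_of_edge_eq hG).2 (E'.participates_seq hk')))

end TwoRuns

section TwoProfiles

variable {A : Type*} {Q : Finset ℝ} {rs : Finset A} {θ θ' : A → Report A} {i : A}
  (hG : edge θ = edge θ') (hwel : ∀ a, a ≠ i → welfare Q (θ a) = welfare Q (θ' a))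
  (E : PEVRun Q rs θ) (E' : PEVRun Q rs θ')
include hG hwel

lemma welfare_last_eq (hj : E.seq (E.m - 1) ≠ i) (hj' : E'.seq (E'.m - 1) ≠ i) :
    welfare Q (θ (E.seq (E.m - 1))) = welfare Q (θ' (E'.seq (E'.m - 1))) := by
  have hm := E.hm
  have hm' := E'.hm
  apply le_antisymm
  · rw [hwel _ hj]
    exact E'.hj.2 _ ((participates_iff_of_edge_eq hG).1 (E.participates_seq (by omega)))
  · rw [← hwel _ hj']
    exact E.hj.2 _ ((participates_iff_of_edge_eq hG).2 (E'.participates_seq (by omega)))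

lemma cmax_eq_max_of_participates_last {x : A} {v : ℝ} (hj : E.seq (E.m - 1) ≠ i)
    (hj' : E'.seq (E'.m - 1) ≠ i) (h : cmax Q rs θ x v)
    (hx : participates rs θ {x} (E'.seq (E'.m - 1))) :
    v = max 0 (welfare Q (θ (E.seq (E.m - 1)))) :=
  h.eq_max E.hj.2 hx (by rw [hwel _ hj', welfare_last_eq hG hwel E E' hj hj'])

lemma w_eq_of_seq_eq {k k' : ℕ} (hk : k < E.m) (hk' : k' < E'.m) (hi : E.seq k = i)
    (hi' : E'.seq k' = i) : E.w k = E'.w k' :=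
  (hi ▸ E.hw k hk).eq_of_not_participates hG hwel (hi' ▸ E'.hw k' hk') fun h => h.1 rfl

lemma w_succ_eq_w_of_not_mem {k : ℕ} (hi : E.seq k = i) (hkt : k < E.t)
    (hnot : ∀ k' < E'.m, E'.seq k' ≠ i) : E.w (k + 1) = E.w k := by
  have ht := E.ht
  have hm' := E'.hm
  have hj : E.seq (E.m - 1) ≠ i := hi ▸ E.seq_last_ne hkt
  have hj' : E'.seq (E'.m - 1) ≠ i := hnot _ (by omega)
  have hij' : ¬ critical rs θ i (E'.seq (E'.m - 1)) := fun hc => by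
    obtain ⟨p, hp, hpi⟩ := E'.exists_seq_eq ((critical_iff_of_edge_eq hG).1 hc)
      ((participates_iff_of_edge_eq hG).1 (hi ▸ E.participates_seq (by omega)))
    exact hnot p hp hpi
  have hxj' : ¬ critical rs θ (E.seq (k + 1)) (E'.seq (E'.m - 1)) := fun hc =>
    hij' ((hi ▸ E.critical_seq (Nat.le_succ k) (by omega)).trans hc)
  calc E.w (k + 1) = max 0 (welfare Q (θ (E.seq (E.m - 1)))) :=
        cmax_eq_max_of_participates_last hG hwel E E' hj hj' (E.hw (k + 1) (by omega))
          (participates_of_not_critical hxj')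
    _ = E.w k := (cmax_eq_max_of_participates_last hG hwel E E' hj hj' (hi ▸ E.hw k (by omega))
          (participates_of_not_critical hij')).symm

lemma t_le_t_of_t_lt {k : ℕ} (hk : k < E.m) (hk' : k < E'.m) (hi : E.seq k = i)
    (hagree : ∀ l ≤ k, E.seq l = E'.seq l) (ht' : E'.t < k) : E.t ≤ E'.t := by
  set t := E'.t
  have hcrit : critical rs θ (E.seq (t + 1)) i := hi ▸ E.critical_seq (by omega) hk
  have hw : E.w (t + 1) = E'.w (t + 1) :=
    (E.hw (t + 1) (by omega)).eq_of_not_participates hG hwel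
      (hagree (t + 1) (by omega) ▸ E'.hw (t + 1) (by omega)) (not_participates_of_critical hcrit)
  have hti : E.seq t ≠ i := fun h => by
    have := E.hinj t (by omega) k hk (h.trans hi.symm)
    omega
  by_contra! htt
  refine E.hsel.2 t htt ?_
  rw [hwel _ hti, hagree t (by omega), hw]
  exact E'.hsel.1 (by omega)

lemma w_succ_eq {k : ℕ} (hi : E.seq k = i) (hkt : k < E.t) (hkt' : k < E'.t)
    (hagree : ∀ l ≤ k, E.seq l = E'.seq l) : E.w (k + 1) = E'.w (k + 1) := by
  have hk := E.ht
  have hk' := E'.ht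
  have hi' : E'.seq k = i := hagree k le_rfl ▸ hi
  by_cases hx : E.seq (k + 1) = E'.seq (k + 1)
  · exact (E.hw (k + 1) (by omega)).eq_of_welfare_ne hG hwel (hx ▸ E'.hw (k + 1) (by omega))
      (hi ▸ E.hsel.2 k hkt) (hi' ▸ E'.hsel.2 k hkt')
  have hj := hi ▸ E.seq_last_ne hkt
  have hj' := hi' ▸ E'.seq_last_ne hkt'
  have hwel' : ∀ a, a ≠ i → welfare Q (θ' a) = welfare Q (θ a) :=
    fun a ha => (hwel a ha).symm
  calc E.w (k + 1) = max 0 (welfare Q (θ (E.seq (E.m - 1)))) :=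
        cmax_eq_max_of_participates_last hG hwel E E' hj hj' (E.hw (k + 1) (by omega))
          (participates_of_not_critical
            (not_critical_seq_succ_last hG E E' hagree (by omega) (by omega) hx))
    _ = max 0 (welfare Q (θ' (E'.seq (E'.m - 1)))) := by
        rw [welfare_last_eq hG hwel E E' hj hj']
    _ = E'.w (k + 1) :=
        (cmax_eq_max_of_participates_last hG.symm hwel' E' E hj' hj (E'.hw (k + 1) (by omega))
          (participates_of_not_critical (not_critical_seq_succ_last hG.symm E' E
            (fun l hl => (hagree l hl).symm) (by omega) (by omega) (Ne.symm hx)))).symm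

lemma payoff_eq_of_lt_t {k : ℕ} (hkt : k < E.t) (hi : E.seq k = i) (hsel' : E'.seq E'.t ≠ i)
    (q : ℝ) : E.p q i = E'.p q i := by
  have hk := E.ht
  subst hi
  rw [E.hpay1 q k hkt]
  by_cases hmem : ∃ k' < E'.m, E'.seq k' = E.seq k
  · obtain ⟨k', hk', hkk'⟩ := hmem
    obtain rfl : k = k' := index_eq_of_seq_eq hG E E' (by omega) hk' hkk'.symm
    have hagree : ∀ l ≤ k, E.seq l = E'.seq l := fun l hl =>
      seq_eq_of_seq_eq hG E E' (by omega) hk' hkk'.symm l hl hl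
    have hkt' : k < E'.t := by
      rcases lt_trichotomy k E'.t with h | rfl | h
      · exact h
      · exact absurd hkk' hsel'
      · have := t_le_t_of_t_lt hG hwel E E' (by omega) hk' rfl hagree h
        omega
    rw [← hkk', E'.hpay1 q k hkt', w_succ_eq hG hwel E E' rfl hkt hkt' hagree,
      w_eq_of_seq_eq hG hwel E E' (by omega) hk' rfl hkk']
  · rw [E'.hpay4 q _ fun k' hk' h => hmem ⟨k', hk', h⟩,
      w_succ_eq_w_of_not_mem hG hwel E E' rfl hkt fun k' hk' h => hmem ⟨k', hk', h⟩, sub_self]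

end TwoProfiles

/-- In the PEV-based Diffusion Mechanism, an agent's payoff is independent of her own
reported distribution and cost: if two report profiles differ only in agent `i`'s
reported `f` and `c` (same neighbour set and same reports of the others), and `i` is
selected in both or unselected in both, then for every realized quality `i`'s payoff
is the same under both profiles. -/
theorem stmt_3 {A : Type*} (Q : Finset ℝ) (rs : Finset A) (θ θ' : A → Report A) (i : A)
    (hothers : ∀ a, a ≠ i → θ a = θ' a) (hnbrs : (θ i).nbrs = (θ' i).nbrs)
    (R : PEVRun Q rs θ) (R' : PEVRun Q rs θ')
    (hstatus : (R.seq R.t = i ∧ R'.seq R'.t = i) ∨ (R.seq R.t ≠ i ∧ R'.seq R'.t ≠ i)) :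
    ∀ q ∈ Q, R.p q i = R'.p q i := by
  intro q _
  have hG : edge θ = edge θ' := edge_eq_of_nbrs_eq fun a => by
    by_cases ha : a = i
    · rw [ha, hnbrs]
    · rw [hothers a ha]
  have hwel : ∀ a, a ≠ i → welfare Q (θ a) = welfare Q (θ' a) := fun a ha => by
    rw [hothers a ha]
  rcases hstatus with ⟨hs, hs'⟩ | ⟨hs, hs'⟩
  · calc R.p q i = q - R.w R.t := hs ▸ R.hpay2 q
      _ = q - R'.w R'.t := by rw [w_eq_of_seq_eq hG hwel R R' R.ht R'.ht hs hs']
      _ = R'.p q i := (hs' ▸ R'.hpay2 q).symm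
  by_cases h : ∃ k < R.t, R.seq k = i
  · obtain ⟨k, hkt, hk⟩ := h
    exact payoff_eq_of_lt_t hG hwel R R' hkt hk hs' q
  by_cases h' : ∃ k < R'.t, R'.seq k = i
  · obtain ⟨k, hkt, hk⟩ := h'
    exact (payoff_eq_of_lt_t hG.symm (fun a ha => (hwel a ha).symm) R' R hkt hk hs q).symm
  rw [R.payoff_eq_zero (fun k hk hki => h ⟨k, hk, hki⟩) hs q,
    R'.payoff_eq_zero (fun k hk hki => h' ⟨k, hk, hki⟩) hs' q]
end

section
/- The PEV-based Diffusion Mechanism is individually rational: for every agent i with true type θ_i = (f_i, c_i, r_i) and every report profile θ'_{−i} of the other agents, when agent i reports truthfully her expected utility E_{f_i}[p_i − π_i·c_i] is nonnegative, where the expectation is over her realized quality drawn from her true distribution f_i. -/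
open Finset

section aux
variable {A : Type*}

lemma chain_of_rtg {r : A → A → Prop} {a b : A} (h : Relation.ReflTransGen r a b) :
    ∃ l : List A, l.Chain' r ∧ l.head? = some a ∧ l.getLast? = some b := by
  induction h with
  | refl => exact ⟨[a], List.isChain_singleton _, rfl, rfl⟩
  | @tail b c h e ih =>
    obtain ⟨l, hc, hh, hl⟩ := ih
    refine ⟨l ++ [c], ?_, ?_, List.getLast?_concat⟩
    · rw [List.Chain', List.isChain_append]
      refine ⟨hc, List.isChain_singleton _, ?_⟩
      intro x hx y hy
      simp only [List.head?_cons, Option.mem_def, Option.some.injEq] at hy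
      rw [hl] at hx
      simp only [Option.mem_def, Option.some.injEq] at hx
      subst hx; subst hy; exact e
    · rw [List.head?_append, hh]; rfl

lemma rtg_of_chain {r : A → A → Prop} : ∀ (l : List A) {a b : A}, l.Chain' r →
    l.head? = some a → l.getLast? = some b → Relation.ReflTransGen r a b := by
  intro l
  induction l with
  | nil => intro a b _ h; simp at h
  | cons x l ih =>
    intro a b hc hh hl
    simp only [List.head?_cons, Option.some.injEq] at hh
    subst hh
    cases l with
    | nil =>
      simp only [List.getLast?_singleton, Option.some.injEq] at hl
      subst hl; exact .refl
    | cons y l' =>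
      rw [List.Chain', List.isChain_cons_cons] at hc
      exact Relation.ReflTransGen.head hc.1 (ih hc.2 rfl (by simpa using hl))

lemma rtg_of_mem_chain {r : A → A → Prop} : ∀ (l : List A) {a x : A}, l.Chain' r →
    l.head? = some a → x ∈ l → Relation.ReflTransGen r a x := by
  intro l
  induction l with
  | nil => intro a x _ _ h; simp at h
  | cons y l ih =>
    intro a x hc hh hx
    simp only [List.head?_cons, Option.some.injEq] at hh
    subst hh
    rcases List.mem_cons.1 hx with rfl | hx
    · exact .refl
    · cases l with
      | nil => simp at hx
      | cons z l' =>
        rw [List.Chain', List.isChain_cons_cons] at hc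
        exact Relation.ReflTransGen.head hc.1 (ih hc.2 rfl hx)

lemma chain_notmem {θ : A → Report A} {R : Set A} : ∀ (l : List A) {a : A},
    l.Chain' (edge θ R) → l.head? = some a → a ∉ R → ∀ x ∈ l, x ∉ R := by
  intro l
  induction l with
  | nil => simp
  | cons y l ih =>
    intro a hc hh ha x hx
    simp only [List.head?_cons, Option.some.injEq] at hh
    subst hh
    rcases List.mem_cons.1 hx with rfl | hx
    · exact ha
    · cases l with
      | nil => simp at hx
      | cons z l' =>
        rw [List.Chain', List.isChain_cons_cons] at hc
        exact ih hc.2 rfl hc.1.2.1 x hx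

lemma chain_change {θ : A → Report A} {R R' : Set A} : ∀ (l : List A),
    l.Chain' (edge θ R) → (∀ x ∈ l, x ∉ R') → l.Chain' (edge θ R') := by
  intro l
  induction l with
  | nil => intro _ _; exact List.isChain_nil
  | cons y l ih =>
    intro hc hmem
    rw [List.Chain', List.isChain_cons] at hc ⊢
    refine ⟨?_, ih hc.2 fun x hx => hmem x (List.mem_cons_of_mem _ hx)⟩
    intro b hb
    exact ⟨hmem y (by simp), hmem b (List.mem_cons_of_mem _ (List.mem_of_mem_head? hb)),
      (hc.1 b hb).2.2⟩

lemma chain_dedup {r : A → A → Prop} [DecidableEq A] : ∀ (l : List A), l.Chain' r →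
    ∃ l' : List A, l'.Nodup ∧ l'.Chain' r ∧ l'.head? = l.head? ∧ l'.getLast? = l.getLast? := by
  intro l
  induction l with
  | nil => exact fun _ => ⟨[], by simp [List.Chain']⟩
  | cons a rest ih =>
    intro hc
    cases rest with
    | nil => exact ⟨[a], by simp [List.Chain']⟩
    | cons b rest2 =>
      obtain ⟨l', hnd, hch, hh, hl⟩ := ih hc.tail
      have hr : r a b := (List.isChain_cons_cons.1 hc).1
      by_cases hmem : a ∈ l'
      · obtain ⟨u, v, huv⟩ := List.append_of_mem hmem
        refine ⟨a :: v, ?_, ?_, by simp, ?_⟩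
        · exact (huv ▸ List.sublist_append_right u (a :: v)).nodup hnd
        · exact hch.suffix ⟨u, huv.symm⟩
        · rw [huv, List.getLast?_append] at hl
          rw [List.getLast?_cons_cons, ← hl]
          cases hv : (a :: v).getLast? with
          | none => simp at hv
          | some c => simp [hv]
      · refine ⟨a :: l', by simp [hnd, hmem], ?_, by simp, ?_⟩
        · rw [List.Chain', List.isChain_cons]
          refine ⟨?_, hch⟩
          intro y hy
          rw [hh] at hy
          simp only [List.head?_cons, Option.mem_def, Option.some.injEq] at hy
          subst hy; exact hr
        · cases l' with
          | nil => simp at hh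
          | cons c l'' => rw [List.getLast?_cons_cons, hl, List.getLast?_cons_cons]

lemma part_weaken {rs : Finset A} {θ : A → Report A} {R : Set A} {a : A}
    (h : participates rs θ R a) : participates rs θ ∅ a := by
  obtain ⟨ha, j, hjrs, hjR, hrtg⟩ := h
  exact ⟨by simp, j, hjrs, by simp,
    Relation.ReflTransGen.mono (fun x y e => ⟨by simp, by simp, e.2.2⟩) _ _ hrtg⟩

lemma key_lemma [DecidableEq A] {rs : Finset A} {θ : A → Report A} {x y a : A}
    (hcr : critical rs θ x y) (hpart : participates rs θ {x} a) :
    participates rs θ {y} a := by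
  obtain ⟨ha, j, hjrs, hjx, hrtg⟩ := hpart
  obtain ⟨l, hch, hh, hl⟩ := chain_of_rtg hrtg
  have hj_mem : j ∈ l := List.mem_of_mem_head? (Option.mem_def.2 hh)
  have ha_mem : a ∈ l := by
    obtain ⟨h', he⟩ := List.mem_getLast?_eq_getLast (Option.mem_def.2 hl)
    exact he ▸ List.getLast_mem h'
  by_cases hy : y ∈ l
  · exfalso
    have hrt2 : Relation.ReflTransGen (edge θ {x}) j y := rtg_of_mem_chain l hch hh hy
    obtain ⟨l2, hch2, hh2, hl2⟩ := chain_of_rtg hrt2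
    obtain ⟨l3, hnd3, hch3, hh3, hl3⟩ := chain_dedup l2 hch2
    have hh3' : l3.head? = some j := by rw [hh3, hh2]
    have hnotx3 : ∀ z ∈ l3, z ∉ ({x} : Set A) := chain_notmem l3 hch3 hh3' hjx
    have hpath : pathTo rs θ y l3 :=
      ⟨hnd3, chain_change l3 hch3 (by simp), ⟨j, hh3', hjrs⟩, by rw [hl3, hl2]⟩
    exact hnotx3 x (hcr l3 hpath) rfl
  · have hnoty : ∀ z ∈ l, z ∉ ({y} : Set A) := by
      intro z hz hzy
      exact hy (Set.mem_singleton_iff.1 hzy ▸ hz)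
    have hch' : l.Chain' (edge θ {y}) := chain_change l hch hnoty
    exact ⟨hnoty a ha_mem, j, hjrs, hnoty j hj_mem, rtg_of_chain l hch' hh hl⟩

end aux

/-- Individual rationality of the PEV-based Diffusion Mechanism: a truthfully
reporting agent `i` (whose true type is her report `θ i`) has nonnegative expected
utility, the expectation being over her realized quality drawn from her true
distribution. -/

theorem stmt_4 {A : Type*} [DecidableEq A] (Q : Finset ℝ) (hQ : ∀ q ∈ Q, 0 ≤ q)
    (rs : Finset A) (θ : A → Report A) (i : A)
    (hpmf : IsPMF Q (θ i).f) (hc : 0 ≤ (θ i).c)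
    (hex : ∃ k, participates rs θ ∅ k ∧ 0 ≤ welfare Q (θ k))
    (R : PEVRun Q rs θ) :
    0 ≤ ∑ q ∈ Q, (θ i).f q * (R.p q i - (if R.seq R.t = i then (θ i).c else 0)) := by
  have mono : ∀ k, k + 1 < R.m → R.w k ≤ R.w (k + 1) := by
    intro k hk1
    have hk : k < R.m := Nat.lt_of_succ_lt hk1
    obtain ⟨hw0, hwub, hwc⟩ := R.hw k hk
    obtain ⟨hw0', hwub', -⟩ := R.hw (k+1) hk1
    rcases hwc with h0 | ⟨a, hpa, hwa⟩
    · rw [h0]; exact hw0'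
    · rw [hwa]
      exact hwub' a (key_lemma (R.hord k (k+1) (Nat.lt_succ_self k) hk1) hpa)
  have hwt : R.w R.t ≤ welfare Q (θ (R.seq R.t)) := by
    by_cases ht1 : R.t + 1 < R.m
    · rw [R.hsel.1 ht1]; exact mono R.t ht1
    · have htm : R.t = R.m - 1 := by have := R.ht; omega
      obtain ⟨hw0, hwub, hwc⟩ := R.hw R.t R.ht
      have hjmax := R.hj.2
      rcases hwc with h0 | ⟨a, hpa, hwa⟩
      · obtain ⟨k0, hk0p, hk0w⟩ := hex
        rw [h0, htm]
        exact le_trans hk0w (hjmax k0 hk0p)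
      · rw [hwa, htm]
        exact hjmax a (part_weaken hpa)
  by_cases hin : ∃ k, k < R.m ∧ R.seq k = i
  · obtain ⟨k, hk, hki⟩ := hin
    rcases lt_trichotomy k R.t with hlt | heq | hgt
    · have hne : R.seq R.t ≠ i := by
        intro h
        have := R.hinj R.t R.ht k hk (h.trans hki.symm)
        omega
      have hk1 : k + 1 < R.m := by have := R.ht; omega
      have hsum : ∀ q ∈ Q, (θ i).f q * (R.p q i - (if R.seq R.t = i then (θ i).c else 0))
          = (θ i).f q * (R.w (k+1) - R.w k) := by
        intro q _
        rw [if_neg hne, sub_zero, ← hki, R.hpay1 q k hlt]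
      rw [Finset.sum_congr rfl hsum, ← Finset.sum_mul, hpmf.2, one_mul]
      have := mono k hk1
      linarith
    · subst heq
      rw [if_pos hki]
      have hsum : ∀ q ∈ Q, (θ i).f q * (R.p q i - (θ i).c)
          = q * (θ i).f q - (θ i).f q * (R.w R.t + (θ i).c) := by
        intro q _
        rw [← hki, R.hpay2 q]
        ring
      rw [Finset.sum_congr rfl hsum, Finset.sum_sub_distrib, ← Finset.sum_mul, hpmf.2, one_mul]
      rw [hki] at hwt
      unfold welfare at hwt
      linarith
    · have hne : R.seq R.t ≠ i := by
        intro h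
        have := R.hinj R.t R.ht k hk (h.trans hki.symm)
        omega
      have hsum : ∀ q ∈ Q, (θ i).f q * (R.p q i - (if R.seq R.t = i then (θ i).c else 0)) = 0 := by
        intro q _
        rw [if_neg hne, sub_zero, ← hki, R.hpay3 q k hgt hk, mul_zero]
      rw [Finset.sum_congr rfl hsum, Finset.sum_const_zero]
  · have hne : R.seq R.t ≠ i := fun h => hin ⟨R.t, R.ht, h⟩
    have hsum : ∀ q ∈ Q, (θ i).f q * (R.p q i - (if R.seq R.t = i then (θ i).c else 0)) = 0 := by
      intro q _
      rw [if_neg hne, sub_zero, R.hpay4 q i (fun k hk hq => hin ⟨k, hk, hq⟩), mul_zero]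
    rw [Finset.sum_congr rfl hsum, Finset.sum_const_zero]
end

section
/- The PEV-based Diffusion Mechanism is weakly budget balanced: for every report profile θ', the requester's expected utility E[q_π − Σ_i p_i(θ', q_π)] equals w_{i_1}, the maximum reported expected welfare among agents reachable without the first critical agent i_1 (i.e., among the requester's other neighbors' reachable set), and hence is nonnegative. In particular the telescoping identity Σ_{k<t}(w_{i_{k+1}} − w_{i_k}) + (q_π − w_{i_t}) = q_π − w_{i_1} holds. -/
open Finset

/-- Weak budget balance of the PEV-based Diffusion Mechanism: the telescoping identity
Σ_{k<t}(w_{k+1} - w_k) + (q - w_t) = q - w_0 holds, and the requester's expected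
utility E[q_π - Σ_i p_i] (expectation over the selected agent's true distribution `f`)
equals w_{i_1} = w 0, which is nonnegative. -/
theorem stmt_6 {A : Type*} [Fintype A] (Q : Finset ℝ) (rs : Finset A) (θ : A → Report A)
    (R : PEVRun Q rs θ) (f : ℝ → ℝ) (hf : IsPMF Q f) :
    (∀ q : ℝ, (∑ k ∈ Finset.range R.t, (R.w (k + 1) - R.w k)) + (q - R.w R.t) = q - R.w 0) ∧
    (∑ q ∈ Q, f q * (q - ∑ i, R.p q i)) = R.w 0 ∧
    0 ≤ R.w 0 := by
  classical
  have htel : ∀ q : ℝ, (∑ k ∈ Finset.range R.t, (R.w (k + 1) - R.w k)) + (q - R.w R.t)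
      = q - R.w 0 := by
    intro q
    rw [Finset.sum_range_sub]
    ring
  refine ⟨htel, ?_, (R.hw 0 R.hm).1⟩
  have hval : ∀ q : ℝ, q - (∑ i, R.p q i) = R.w 0 := by
    intro q
    have hsum : (∑ i, R.p q i) = ∑ k ∈ Finset.range R.m, R.p q (R.seq k) := by
      have himg : ∑ k ∈ Finset.range R.m, R.p q (R.seq k)
          = ∑ i ∈ (Finset.range R.m).image R.seq, R.p q i := by
        rw [Finset.sum_image]
        intro a ha b hb hab
        exact R.hinj a (Finset.mem_range.mp ha) b (Finset.mem_range.mp hb) hab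
      rw [himg]
      refine (Finset.sum_subset (Finset.subset_univ _) ?_).symm
      intro i _ hi
      refine R.hpay4 q i fun k hk hki =>
        hi (Finset.mem_image.mpr ⟨k, Finset.mem_range.mpr hk, hki⟩)
    have hsplit : ∑ k ∈ Finset.range R.m, R.p q (R.seq k)
        = ∑ k ∈ Finset.range (R.t + 1), R.p q (R.seq k) := by
      refine (Finset.sum_subset (Finset.range_subset_range.mpr R.ht) ?_).symm
      intro k hk hk'
      have hkt : R.t < k := by
        have := Finset.mem_range.not.mp hk'
        omega
      exact R.hpay3 q k hkt (Finset.mem_range.mp hk)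
    have hfirst : ∑ k ∈ Finset.range (R.t + 1), R.p q (R.seq k)
        = (∑ k ∈ Finset.range R.t, (R.w (k + 1) - R.w k)) + (q - R.w R.t) := by
      rw [Finset.sum_range_succ, R.hpay2 q]
      congr 1
      exact Finset.sum_congr rfl fun k hk => R.hpay1 q k (Finset.mem_range.mp hk)
    rw [hsum, hsplit, hfirst, htel q]
    ring
  calc (∑ q ∈ Q, f q * (q - ∑ i, R.p q i)) = ∑ q ∈ Q, f q * R.w 0 := by
        exact Finset.sum_congr rfl fun q _ => by rw [hval q]
    _ = (∑ q ∈ Q, f q) * R.w 0 := by rw [Finset.sum_mul]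
    _ = R.w 0 := by rw [hf.2, one_mul]
end
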